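/- Let i be a reduced word for a permutation w in S_n and fix k. Let a_1 < ... < a_N be the positions of the letters s_k in i, and for each j let A_j be the image of {1,...,k} under the prefix permutation s_{i_1}...s_{i_{a_j}}, with A_0 = {1,...,k}. Then (A_0, A_1, ..., A_N) is a monotone weakly separated path: the collection {A_0,...,A_N} is weakly separated, and for each j, A_j is obtained from A_{j-1} by removing one element y and adding one element x with x > y. -/

import Mathlib

/-- The simple transposition `s_i = (i, i+1)` (1-indexed values) in `S_n`,
realized on `Fin n` (0-indexed positions `i-1` and `i`); junk value `1` otherwise. -/
def sgen (n i : ℕ) : Equiv.Perm (Fin n) :=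
  if h : 0 < i ∧ i < n then Equiv.swap ⟨i - 1, by omega⟩ ⟨i, h.2⟩ else 1

/-- `l` is a reduced word for `w ∈ S_n`: its product is `w` and it has minimal length. -/
def IsReducedWordFor (n : ℕ) (l : List ℕ) (w : Equiv.Perm (Fin n)) : Prop :=
  (l.map (sgen n)).prod = w ∧
    ∀ l' : List ℕ, (l'.map (sgen n)).prod = w → l.length ≤ l'.length

/-- The longest permutation `w_0 = n (n-1) ⋯ 2 1` of `S_n`. -/
def longestPerm (n : ℕ) : Equiv.Perm (Fin n) := Fin.revPerm

/-- `M(k,n)`: the maximum multiplicity of `s_k` among reduced words of `w_0 ∈ S_n`. -/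
noncomputable def Mmax (k n : ℕ) : ℕ :=
  sSup {N | ∃ l : List ℕ, IsReducedWordFor n l (longestPerm n) ∧ l.count k = N}

/-- Two finite sets are weakly separated. -/
def WeaklySeparated (I J : Finset ℕ) : Prop :=
  (∀ a ∈ I \ J, ∀ b ∈ J \ I, a < b) ∨ (∀ b ∈ J \ I, ∀ a ∈ I \ J, b < a)

/-- A monotone weakly separated path: pairwise weakly separated, and each step removes
one element `y` and adds one element `x > y`. -/
def IsMWSPath (P : List (Finset ℕ)) : Prop :=
  (∀ A ∈ P, ∀ B ∈ P, WeaklySeparated A B) ∧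
    List.Chain' (fun A B => ∃ x y, y ∈ A ∧ x ∉ A ∧ y < x ∧ B = insert x (A.erase y)) P

/-- The set `{w(1), …, w(k)}` (1-indexed values) for `w ∈ S_n`. -/
def topSet (n k : ℕ) (w : Equiv.Perm (Fin n)) : Finset ℕ :=
  Finset.image (fun j => (w j : ℕ) + 1)
    (Finset.univ.filter (fun j : Fin n => (j : ℕ) < k))

/-- The prefixes of `l` ending at each occurrence of the letter `k`. -/
def kPrefixes (k : ℕ) (l : List ℕ) : List (List ℕ) :=
  ((List.range l.length).filter (fun a => l[a]? = some k)).map (fun a => l.take (a + 1))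

/-- The sequence `(A_0, A_1, …, A_N)` of `k`-sets extracted from the word `l`. -/
def extractedPath (n k : ℕ) (l : List ℕ) : List (Finset ℕ) :=
  topSet n k 1 :: (kPrefixes k l).map (fun p => topSet n k ((p.map (sgen n)).prod))

/-!
In a reduced word every letter is an ascent of the prefix product read so far: the number of
inversions can grow by at most one per letter and must reach the length of the word. So the
letter `s_k` replaces `u(k-1) + 1` by the larger value `u(k) + 1` in `{u(1), …, u(k)}`, while the
other letters leave this set alone. Moreover, a pair of values that is inverted in one prefix
product stays inverted in all later ones, and an element of `A_a \ A_b` exceeding an element of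
`A_b \ A_a` would be such a pair that gets uninverted between `a` and `b`.
-/

open Finset Equiv

section Inversions

variable {n : ℕ}

lemma sgen_eq_swap {a b : Fin n} (hab : (a : ℕ) + 1 = b) : sgen n b = swap a b := by
  rw [sgen, dif_pos ⟨by omega, b.2⟩]
  congr 1
  exact Fin.ext (by simp only; omega)

lemma sgen_eq_one_or_eq_swap (i : ℕ) :
    sgen n i = 1 ∨ ∃ a b : Fin n, (a : ℕ) + 1 = b ∧ (b : ℕ) = i ∧ sgen n i = swap a b := by
  by_cases hi : 0 < i ∧ i < n
  · exact Or.inr ⟨⟨i - 1, by omega⟩, ⟨i, hi.2⟩, by simp only; omega, rfl, dif_pos hi⟩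
  · exact Or.inl (dif_neg hi)

lemma swap_lt_swap_of_lt {a b p q : Fin n} (hab : (a : ℕ) + 1 = b) (hpq : p < q)
    (hne : ¬(p = a ∧ q = b)) : swap a b p < swap a b q := by
  rw [Fin.lt_def] at hpq ⊢
  simp only [swap_apply_def, apply_ite Fin.val, Fin.ext_iff] at hne ⊢
  rcases not_and_or.mp hne with h | h <;> split_ifs <;> omega

/-- `u (i - 1) < u i` in 0-indexed positions; vacuous unless `0 < i < n`. -/
def IsAscentAt (u : Perm (Fin n)) (i : ℕ) : Prop :=
  ∀ a b : Fin n, (a : ℕ) + 1 = b → (b : ℕ) = i → u a < u b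

def inversions (w : Perm (Fin n)) : Finset (Fin n × Fin n) :=
  univ.filter fun pq => pq.1 < pq.2 ∧ w pq.2 < w pq.1

def numInversions (w : Perm (Fin n)) : ℕ := #(inversions w)

lemma mem_inversions {w : Perm (Fin n)} {p q : Fin n} :
    (p, q) ∈ inversions w ↔ p < q ∧ w q < w p := by
  simp [inversions]

lemma numInversions_one : numInversions (1 : Perm (Fin n)) = 0 := by
  rw [numInversions, card_eq_zero, inversions, filter_eq_empty_iff]
  rintro ⟨p, q⟩ - ⟨h1, h2⟩
  exact h1.asymm h2

lemma inversions_mul_swap_of_lt {w : Perm (Fin n)} {a b : Fin n} (hab : (a : ℕ) + 1 = b)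
    (h : w a < w b) :
    inversions (w * swap a b) =
      insert (a, b) ((inversions w).map ((swap a b).prodCongr (swap a b)).toEmbedding) := by
  ext ⟨p, q⟩
  simp only [mem_insert, mem_map_equiv, prodCongr_symm, symm_swap, prodCongr_apply,
    Prod.map, mem_inversions, Perm.mul_apply, Prod.mk.injEq]
  constructor
  · rintro ⟨hpq, hw⟩
    by_cases hpa : p = a ∧ q = b
    · exact Or.inl hpa
    · exact Or.inr ⟨swap_lt_swap_of_lt hab hpq hpa, hw⟩
  · rintro (⟨rfl, rfl⟩ | ⟨hpq, hw⟩)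
    · exact ⟨Fin.lt_def.2 (by omega), by simpa using h⟩
    · have hne : ¬(swap a b p = a ∧ swap a b q = b) := by
        rintro ⟨hp, hq⟩
        rw [swap_apply_eq_iff, swap_apply_left] at hp
        rw [swap_apply_eq_iff, swap_apply_right] at hq
        subst hp hq
        exact lt_asymm h (by simpa using hw)
      exact ⟨by simpa using swap_lt_swap_of_lt hab hpq hne, hw⟩

lemma numInversions_mul_swap_of_lt {w : Perm (Fin n)} {a b : Fin n} (hab : (a : ℕ) + 1 = b)
    (h : w a < w b) : numInversions (w * swap a b) = numInversions w + 1 := by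
  rw [numInversions, inversions_mul_swap_of_lt hab h, card_insert_of_notMem, card_map]
  · rfl
  rw [mem_map_equiv, prodCongr_symm, symm_swap, prodCongr_apply, Prod.map, swap_apply_left,
    swap_apply_right, mem_inversions]
  exact fun h' => absurd h'.1 (not_lt.2 (Fin.le_def.2 (by omega)))

lemma numInversions_mul_swap_of_gt {w : Perm (Fin n)} {a b : Fin n} (hab : (a : ℕ) + 1 = b)
    (h : w b < w a) : numInversions (w * swap a b) + 1 = numInversions w := by
  have := numInversions_mul_swap_of_lt (w := w * swap a b) hab (by simpa using h)
  rwa [mul_assoc, swap_mul_self, mul_one, eq_comm] at this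

lemma numInversions_mul_sgen_le (u : Perm (Fin n)) (i : ℕ) :
    numInversions (u * sgen n i) ≤ numInversions u + 1 := by
  rcases sgen_eq_one_or_eq_swap (n := n) i with h | ⟨a, b, hab, -, h⟩
  · simp [h]
  rw [h]
  rcases lt_or_gt_of_ne (u.injective.ne (Fin.ne_of_val_ne (by omega : (a : ℕ) ≠ b))) with h' | h'
  · exact (numInversions_mul_swap_of_lt hab h').le
  · have := numInversions_mul_swap_of_gt hab h'
    omega

lemma numInversions_mul_sgen_le_of_not_isAscentAt {u : Perm (Fin n)} {i : ℕ}
    (h : ¬IsAscentAt u i) : numInversions (u * sgen n i) ≤ numInversions u := by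
  simp only [IsAscentAt, not_forall, not_lt] at h
  obtain ⟨a, b, hab, rfl, hle⟩ := h
  have hlt : u b < u a := lt_of_le_of_ne hle (u.injective.ne (Fin.ne_of_val_ne (by omega)))
  have := numInversions_mul_swap_of_gt hab hlt
  rw [sgen_eq_swap hab]
  omega

lemma numInversions_mul_prod_sgen_le (u : Perm (Fin n)) (l : List ℕ) :
    numInversions (u * (l.map (sgen n)).prod) ≤ numInversions u + l.length := by
  induction l generalizing u with
  | nil => simp
  | cons i l ih =>
    rw [List.map_cons, List.prod_cons, ← mul_assoc, List.length_cons]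
    have := numInversions_mul_sgen_le u i
    have := ih (u * sgen n i)
    omega

lemma exists_adjacent_descent_of_ne_one {w : Perm (Fin n)} (hw : w ≠ 1) :
    ∃ a b : Fin n, (a : ℕ) + 1 = b ∧ w b < w a := by
  by_contra! h
  have hmono : StrictMono w := by
    cases n with
    | zero => exact fun p => p.elim0
    | succ m =>
      exact Fin.strictMono_iff_lt_succ.2 fun i =>
        lt_of_le_of_ne (h _ _ (by simp)) (w.injective.ne Fin.castSucc_lt_succ.ne)
  exact hw (Equiv.ext (congrFun hmono.eq_id))

lemma exists_word_length_eq_numInversions (w : Perm (Fin n)) :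
    ∃ l : List ℕ, (l.map (sgen n)).prod = w ∧ l.length = numInversions w := by
  induction hm : numInversions w using Nat.strong_induction_on generalizing w with
  | _ m ih =>
    by_cases hw : w = 1
    · exact ⟨[], by simp [hw], by simp [← hm, hw, numInversions_one]⟩
    obtain ⟨a, b, hab, hba⟩ := exists_adjacent_descent_of_ne_one hw
    have hdesc := numInversions_mul_swap_of_gt hab hba
    obtain ⟨l, hprod, hlen⟩ := ih _ (by omega) (w * swap a b) rfl
    refine ⟨l ++ [(b : ℕ)], ?_, by simp; omega⟩
    simp [hprod, sgen_eq_swap hab, mul_assoc]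

end Inversions

def prefixProd (n : ℕ) (l : List ℕ) (a : ℕ) : Perm (Fin n) :=
  ((l.take a).map (sgen n)).prod

section ReducedWords

variable {n : ℕ}

lemma prefixProd_zero (l : List ℕ) : prefixProd n l 0 = 1 := by
  simp [prefixProd]

lemma prefixProd_succ {l : List ℕ} {a : ℕ} (ha : a < l.length) :
    prefixProd n l (a + 1) = prefixProd n l a * sgen n l[a] := by
  rw [prefixProd, prefixProd, List.take_add_one, List.getElem?_eq_getElem ha, Option.toList_some,
    List.map_append, List.prod_append, List.map_singleton, List.prod_singleton]

lemma prefixProd_succ_of_le {l : List ℕ} {a : ℕ} (ha : l.length ≤ a) :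
    prefixProd n l (a + 1) = prefixProd n l a := by
  rw [prefixProd, prefixProd, List.take_of_length_le ha, List.take_of_length_le (by omega)]

lemma IsReducedWordFor.length_le_numInversions {l : List ℕ} {w : Perm (Fin n)}
    (hl : IsReducedWordFor n l w) : l.length ≤ numInversions w := by
  obtain ⟨l₀, hprod, hlen⟩ := exists_word_length_eq_numInversions w
  exact hlen ▸ hl.2 l₀ hprod

lemma IsReducedWordFor.isAscentAt_prefixProd {l : List ℕ} {w : Perm (Fin n)}
    (hl : IsReducedWordFor n l w) {a : ℕ} (ha : a < l.length) :
    IsAscentAt (prefixProd n l a) l[a] := by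
  by_contra hasc
  have hstep := numInversions_mul_sgen_le_of_not_isAscentAt hasc
  have hprefix : numInversions (prefixProd n l a) ≤ a := by
    have := numInversions_mul_prod_sgen_le (1 : Perm (Fin n)) (l.take a)
    rw [one_mul, numInversions_one, List.length_take] at this
    exact this.trans (by omega)
  have hsplit : w = prefixProd n l (a + 1) * ((l.drop (a + 1)).map (sgen n)).prod := by
    rw [← hl.1, prefixProd, ← List.prod_append, ← List.map_append, List.take_append_drop]
  have hsuffix := numInversions_mul_prod_sgen_le (prefixProd n l (a + 1)) (l.drop (a + 1))
  rw [← hsplit, prefixProd_succ ha, List.length_drop] at hsuffix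
  have := hl.length_le_numInversions
  omega

lemma symm_mul_sgen_lt_of_isAscentAt {u : Perm (Fin n)} {i : ℕ} (hasc : IsAscentAt u i)
    {p q : Fin n} (hpq : p < q) (hinv : u.symm q < u.symm p) :
    (u * sgen n i).symm q < (u * sgen n i).symm p := by
  rcases sgen_eq_one_or_eq_swap (n := n) i with h | ⟨a, b, hab, rfl, h⟩
  · simpa [h] using hinv
  simp only [h, Perm.mul_def, symm_trans_apply, symm_swap]
  refine swap_lt_swap_of_lt hab hinv fun ⟨hq, hp⟩ => ?_
  rw [symm_apply_eq] at hq hp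
  exact lt_asymm hpq (hq ▸ hp ▸ hasc a b hab rfl)

lemma IsReducedWordFor.prefixProd_symm_lt_of_le {l : List ℕ} {w : Perm (Fin n)}
    (hl : IsReducedWordFor n l w) {a b : ℕ} (hab : a ≤ b) {p q : Fin n} (hpq : p < q)
    (hinv : (prefixProd n l a).symm q < (prefixProd n l a).symm p) :
    (prefixProd n l b).symm q < (prefixProd n l b).symm p := by
  induction b, hab using Nat.le_induction with
  | base => exact hinv
  | succ b _ ih =>
    rcases lt_or_ge b l.length with hb | hb
    · rw [prefixProd_succ hb]
      exact symm_mul_sgen_lt_of_isAscentAt (hl.isAscentAt_prefixProd hb) hpq ih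
    · rwa [prefixProd_succ_of_le hb]

end ReducedWords

section TopSets

variable {n k : ℕ}

lemma mem_topSet {w : Perm (Fin n)} {x : ℕ} :
    x ∈ topSet n k w ↔ ∃ j : Fin n, (j : ℕ) < k ∧ (w j : ℕ) + 1 = x := by
  simp [topSet]

lemma exists_succ_eq_of_mem_topSet {w : Perm (Fin n)} {x : ℕ} (hx : x ∈ topSet n k w) :
    ∃ v : Fin n, (v : ℕ) + 1 = x := by
  obtain ⟨j, -, hj⟩ := mem_topSet.1 hx
  exact ⟨w j, hj⟩

lemma succ_mem_topSet_iff {w : Perm (Fin n)} {v : Fin n} :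
    (v : ℕ) + 1 ∈ topSet n k w ↔ (w.symm v : ℕ) < k := by
  rw [mem_topSet]
  constructor
  · rintro ⟨j, hj, hv⟩
    rwa [← Fin.ext (by omega : (w j : ℕ) = v), symm_apply_apply]
  · exact fun h => ⟨w.symm v, h, by simp⟩

lemma sgen_apply_lt_iff {i : ℕ} (hik : i ≠ k) (j : Fin n) :
    (sgen n i j : ℕ) < k ↔ (j : ℕ) < k := by
  rcases sgen_eq_one_or_eq_swap (n := n) i with h | ⟨a, b, hab, rfl, h⟩
  · simp [h]
  rw [h, swap_apply_def]
  split_ifs with hja hjb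
  · rw [hja]; omega
  · rw [hjb]; omega
  · rfl

lemma topSet_mul_sgen_of_ne (w : Perm (Fin n)) {i : ℕ} (hik : i ≠ k) :
    topSet n k (w * sgen n i) = topSet n k w := by
  ext x
  simp only [mem_topSet, Perm.mul_apply]
  constructor
  · rintro ⟨j, hj, rfl⟩
    exact ⟨sgen n i j, (sgen_apply_lt_iff hik j).2 hj, rfl⟩
  · rintro ⟨j, hj, rfl⟩
    refine ⟨(sgen n i).symm j, (sgen_apply_lt_iff hik _).1 (by simpa using hj), by simp⟩

lemma topSet_mul_swap {a b : Fin n} (hab : (a : ℕ) + 1 = b) (w : Perm (Fin n)) :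
    topSet n b (w * swap a b) = insert ((w b : ℕ) + 1) ((topSet n b w).erase ((w a : ℕ) + 1)) := by
  have hba : ∀ j : Fin n, (j : ℕ) < b → j ≠ b := fun j hj h => by omega
  ext x
  simp only [mem_insert, mem_erase, mem_topSet, Perm.mul_apply]
  constructor
  · rintro ⟨j, hj, rfl⟩
    rcases eq_or_ne j a with rfl | hja
    · exact Or.inl (by rw [swap_apply_left])
    rw [swap_apply_of_ne_of_ne hja (hba j hj)]
    refine Or.inr ⟨fun h => hja (w.injective (Fin.ext (by omega))), j, hj, rfl⟩
  · rintro (rfl | ⟨hxa, j, hj, rfl⟩)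
    · exact ⟨a, by omega, by rw [swap_apply_left]⟩
    have hja : j ≠ a := by rintro rfl; exact hxa rfl
    exact ⟨j, hj, by rw [swap_apply_of_ne_of_ne hja (hba j hj)]⟩

def IsMonotoneStep (A B : Finset ℕ) : Prop :=
  ∃ x y, y ∈ A ∧ x ∉ A ∧ y < x ∧ B = insert x (A.erase y)

lemma isMonotoneStep_topSet_mul_sgen {w : Perm (Fin n)} (hk0 : 0 < k) (hkn : k < n)
    (hasc : IsAscentAt w k) : IsMonotoneStep (topSet n k w) (topSet n k (w * sgen n k)) := by
  obtain ⟨a, b, hab, rfl⟩ : ∃ a b : Fin n, (a : ℕ) + 1 = b ∧ (b : ℕ) = k :=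
    ⟨⟨k - 1, by omega⟩, ⟨k, hkn⟩, by simp only; omega, rfl⟩
  have hlt := Fin.lt_def.1 (hasc a b hab rfl)
  refine ⟨(w b : ℕ) + 1, (w a : ℕ) + 1, ?_, ?_, by omega, ?_⟩
  · rw [succ_mem_topSet_iff, symm_apply_apply]; omega
  · rw [succ_mem_topSet_iff, symm_apply_apply]; exact lt_irrefl _
  · rw [sgen_eq_swap hab, topSet_mul_swap hab]

lemma WeaklySeparated.symm {I J : Finset ℕ} (h : WeaklySeparated I J) : WeaklySeparated J I :=
  Or.symm h

lemma IsReducedWordFor.weaklySeparated_topSet_prefixProd {l : List ℕ} {w : Perm (Fin n)}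
    (hl : IsReducedWordFor n l w) {a b : ℕ} (hab : a ≤ b) :
    WeaklySeparated (topSet n k (prefixProd n l a)) (topSet n k (prefixProd n l b)) := by
  refine Or.inl fun x hx y hy => ?_
  rw [mem_sdiff] at hx hy
  obtain ⟨P, rfl⟩ := exists_succ_eq_of_mem_topSet hx.1
  obtain ⟨Q, rfl⟩ := exists_succ_eq_of_mem_topSet hy.1
  simp only [succ_mem_topSet_iff, not_lt] at hx hy
  have hPQ : (P : ℕ) ≠ Q := fun h => by rw [Fin.ext h] at hx; omega
  have hQP : ¬Q < P := fun hQP => by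
    have := Fin.lt_def.1 (hl.prefixProd_symm_lt_of_le hab hQP (Fin.lt_def.2 (by omega)))
    omega
  rw [Fin.lt_def] at hQP
  omega

end TopSets

lemma List.isChain_cons_map_filter_range' {α : Type*} {R : α → α → Prop} {f : ℕ → α}
    {p : ℕ → Bool} (hstay : ∀ a, p a = false → f (a + 1) = f a)
    (hstep : ∀ a, p a = true → R (f a) (f (a + 1))) (c m : ℕ) :
    IsChain R (f c :: ((range' c m).filter p).map fun a => f (a + 1)) := by
  induction m generalizing c with
  | zero => exact isChain_singleton _
  | succ m ih =>
    rw [range'_succ]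
    cases hc : p c
    · rw [filter_cons_of_neg (by simp [hc]), ← hstay c hc]
      exact ih (c + 1)
    · rw [filter_cons_of_pos hc, map_cons]
      exact (ih (c + 1)).cons_cons (hstep c hc)

section Path

variable {n k : ℕ}

lemma extractedPath_eq (n k : ℕ) (l : List ℕ) :
    extractedPath n k l = topSet n k (prefixProd n l 0) ::
      (((List.range l.length).filter fun a => l[a]? = some k).map
        fun a => topSet n k (prefixProd n l (a + 1))) := by
  simp only [extractedPath, kPrefixes, List.map_map, prefixProd_zero]
  rfl

lemma exists_eq_topSet_prefixProd_of_mem_extractedPath {l : List ℕ} {A : Finset ℕ}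
    (hA : A ∈ extractedPath n k l) : ∃ a, A = topSet n k (prefixProd n l a) := by
  rw [extractedPath_eq, List.mem_cons, List.mem_map] at hA
  rcases hA with rfl | ⟨a, -, rfl⟩
  exacts [⟨0, rfl⟩, ⟨a + 1, rfl⟩]

lemma topSet_prefixProd_succ_of_ne {l : List ℕ} {a : ℕ} (h : l[a]? ≠ some k) :
    topSet n k (prefixProd n l (a + 1)) = topSet n k (prefixProd n l a) := by
  rcases lt_or_ge a l.length with ha | ha
  · rw [prefixProd_succ ha]
    exact topSet_mul_sgen_of_ne _ fun hk => h (by rw [← hk, List.getElem?_eq_getElem ha])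
  · rw [prefixProd_succ_of_le ha]

lemma IsReducedWordFor.isMonotoneStep_topSet_prefixProd {l : List ℕ} {w : Perm (Fin n)}
    (hl : IsReducedWordFor n l w) (hk0 : 0 < k) (hkn : k < n) {a : ℕ} (h : l[a]? = some k) :
    IsMonotoneStep (topSet n k (prefixProd n l a)) (topSet n k (prefixProd n l (a + 1))) := by
  obtain ⟨ha, hk⟩ := List.getElem?_eq_some_iff.1 h
  rw [prefixProd_succ ha, hk]
  exact isMonotoneStep_topSet_mul_sgen hk0 hkn (hk ▸ hl.isAscentAt_prefixProd ha)

end Path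

theorem stmt11 (n k : ℕ) (hk1 : 1 ≤ k) (hk2 : k ≤ n - 1)
    (w : Equiv.Perm (Fin n)) (l : List ℕ) (hl : IsReducedWordFor n l w) :
    IsMWSPath (extractedPath n k l) := by
  refine ⟨fun A hA B hB => ?_, ?_⟩
  · obtain ⟨a, rfl⟩ := exists_eq_topSet_prefixProd_of_mem_extractedPath hA
    obtain ⟨b, rfl⟩ := exists_eq_topSet_prefixProd_of_mem_extractedPath hB
    rcases le_total a b with hab | hba
    · exact hl.weaklySeparated_topSet_prefixProd hab
    · exact (hl.weaklySeparated_topSet_prefixProd hba).symm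
  · rw [extractedPath_eq, List.range_eq_range']
    exact List.isChain_cons_map_filter_range' (R := IsMonotoneStep)
      (f := fun a => topSet n k (prefixProd n l a)) (p := fun a => l[a]? = some k)
      (fun a h => topSet_prefixProd_succ_of_ne (by simpa using h))
      (fun a h => hl.isMonotoneStep_topSet_prefixProd hk1 (by omega) (by simpa using h)) 0 _
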